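/- arXiv:0710.3226 — 2 statements merged into one kernel-verified Lean document; each statement's English description precedes it below -/
import Mathlib

section
/- Let b : ℤ → ℝ satisfy the lens recurrence b(n+1) = α·b(n) − b(n−1) + β for all n ∈ ℤ and the compatibility condition b(n₀)² + b(n₀+1)² = α·b(n₀)·b(n₀+1) + β·(b(n₀) + b(n₀+1)) at some index n₀. Assume α > 2, β < 0, and b(n) > 0 for all n ∈ ℤ. Then the family (1/b(n))ₙ∈ℤ is summable and ∑_{n∈ℤ} 1/b(n) = √(α² − 4)/(−β). -/
/-!
The form `x² + y² - α x y - β (x + y)` is conserved along the recurrence, so the compatibility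
condition holds at every index; together with the recurrence it gives
`b (n - 1) * b (n + 1) = b n ^ 2 - β * b n`, which makes `1 / b n` telescope with potential
`1 / b n - b (n - 1) / (β b n)`. Writing `α = l + l⁻¹` with `l > 1`, every solution is
`A lⁿ + B l⁻ⁿ + β / (2 - α)`, and on it the conserved form equals `-A B (l - l⁻¹)² - β² / (2 - α)`.
Positivity of `b` forces `A, B ≥ 0` and the vanishing of the form then forces `A, B > 0`, so `b`
grows like `l^|n|` at both ends and the potential tends to `-l⁻¹ / β` at `+∞` and to `-l / β` at
`-∞`. The sum is their difference `(l - l⁻¹) / (-β) = √(α² - 4) / (-β)`.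
-/

open Filter Topology

def LensRecurrence (α β : ℝ) (b : ℤ → ℝ) : Prop :=
  ∀ n : ℤ, b (n + 1) = α * b n - b (n - 1) + β

-- The compatibility condition at `n` is `lensForm α β (b n) (b (n + 1)) = 0`.
def lensForm (α β x y : ℝ) : ℝ :=
  x ^ 2 + y ^ 2 - α * x * y - β * (x + y)

noncomputable def lensPotential (β : ℝ) (b : ℤ → ℝ) (n : ℤ) : ℝ :=
  1 / b n - b (n - 1) / b n / β

theorem lensForm_comm (α β x y : ℝ) : lensForm α β x y = lensForm α β y x := by
  unfold lensForm; ring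

theorem lensRecurrence_closedForm {α β l c : ℝ} (hl₀ : l ≠ 0) (hl : l + l⁻¹ = α)
    (hc : c * (2 - α) = β) (A B : ℝ) :
    LensRecurrence α β (fun n ↦ A * l ^ n + B * l ^ (-n) + c) := by
  intro n
  simp only [neg_add, neg_sub', zpow_add₀ hl₀, zpow_sub₀ hl₀, zpow_neg, zpow_one]
  subst hl hc
  field_simp
  ring

theorem lensForm_closedForm {α β l c : ℝ} (hl₀ : l ≠ 0) (hl : l + l⁻¹ = α)
    (hc : c * (2 - α) = β) (A B : ℝ) :
    lensForm α β (A + B + c) (A * l + B * l⁻¹ + c) = -(A * B * (l - l⁻¹) ^ 2) - β * c := by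
  subst hl hc
  unfold lensForm
  field_simp
  ring

theorem exists_one_lt_add_inv_eq {α : ℝ} (hα : 2 < α) :
    ∃ l : ℝ, 1 < l ∧ l + l⁻¹ = α ∧ l - l⁻¹ = √(α ^ 2 - 4) := by
  set s := √(α ^ 2 - 4)
  have hs₀ : 0 < s := Real.sqrt_pos.mpr (by nlinarith)
  have hs : s ^ 2 = α ^ 2 - 4 := Real.sq_sqrt (by nlinarith)
  have hinv : ((α + s) / 2)⁻¹ = (α - s) / 2 := by
    refine inv_eq_of_mul_eq_one_right ?_
    linear_combination (-1 / 4 : ℝ) * hs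
  refine ⟨(α + s) / 2, by linarith, ?_, ?_⟩ <;> rw [hinv] <;> ring

theorem tendsto_closedForm_div_pow {l : ℝ} (hl : 1 < l) (A B c : ℝ) :
    Tendsto (fun N : ℕ ↦ (A * l ^ (N : ℤ) + B * l ^ (-(N : ℤ)) + c) / l ^ N) atTop (𝓝 A) := by
  have hl₀ : l ≠ 0 := by positivity
  have hinv : Tendsto (fun N : ℕ ↦ (l ^ N)⁻¹) atTop (𝓝 0) :=
    tendsto_inv_atTop_zero.comp (tendsto_pow_atTop_atTop_of_one_lt hl)
  have hlim : Tendsto (fun N : ℕ ↦ A + B * ((l ^ N)⁻¹) ^ 2 + c * (l ^ N)⁻¹) atTop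
      (𝓝 (A + B * 0 ^ 2 + c * 0)) :=
    (tendsto_const_nhds.add ((hinv.pow 2).const_mul B)).add (hinv.const_mul c)
  rw [show A + B * 0 ^ 2 + c * 0 = A by ring] at hlim
  refine hlim.congr fun N ↦ ?_
  rw [zpow_neg, zpow_natCast]
  field_simp

theorem tendsto_one_div_of_tendsto_div_pow {u : ℕ → ℝ} {l A : ℝ} (hl : 1 < l) (hA : A ≠ 0)
    (hu : Tendsto (fun N ↦ u N / l ^ N) atTop (𝓝 A)) :
    Tendsto (fun N ↦ 1 / u N) atTop (𝓝 0) := by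
  have hinv : Tendsto (fun N : ℕ ↦ (l ^ N)⁻¹) atTop (𝓝 0) :=
    tendsto_inv_atTop_zero.comp (tendsto_pow_atTop_atTop_of_one_lt hl)
  rw [← zero_div A]
  refine (hinv.div hu hA).congr fun N ↦ ?_
  rw [Pi.div_apply, div_div_eq_mul_div, inv_mul_cancel₀ (by positivity)]

theorem tendsto_succ_div_of_tendsto_div_pow {u : ℕ → ℝ} {l A : ℝ} (hl : l ≠ 0) (hA : A ≠ 0)
    (hu : Tendsto (fun N ↦ u N / l ^ N) atTop (𝓝 A)) :
    Tendsto (fun N ↦ u (N + 1) / u N) atTop (𝓝 l) := by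
  have h := ((hu.comp (tendsto_add_atTop_nat 1)).const_mul l).div hu hA
  rw [mul_div_cancel_right₀ l hA] at h
  refine h.congr fun N ↦ ?_
  simp only [Pi.div_apply, Function.comp_apply, pow_succ]
  field_simp

theorem hasSum_int_of_eq_sub_succ {f g : ℤ → ℝ} {a a' : ℝ} (hf : ∀ n, 0 ≤ f n)
    (hfg : ∀ n, f n = g n - g (n + 1)) (hpos : Tendsto (fun N : ℕ ↦ g N) atTop (𝓝 a))
    (hneg : Tendsto (fun N : ℕ ↦ g (-N)) atTop (𝓝 a')) :
    HasSum f (a' - a) := by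
  have h₁ : HasSum (fun N : ℕ ↦ f N) (g 0 - a) := by
    rw [hasSum_iff_tendsto_nat_of_nonneg fun _ ↦ hf _]
    refine (tendsto_const_nhds.sub hpos).congr fun N ↦ ?_
    have := Finset.sum_range_sub' (fun i : ℕ ↦ g i) N
    push_cast at this
    simp only [hfg, this]
  have h₂ : HasSum (fun N : ℕ ↦ f (-(N + 1))) (a' - g 0) := by
    rw [hasSum_iff_tendsto_nat_of_nonneg fun _ ↦ hf _]
    refine (hneg.sub tendsto_const_nhds).congr fun N ↦ ?_
    have := Finset.sum_range_sub (fun i : ℕ ↦ g (-i)) N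
    push_cast at this
    have hshift : ∀ i : ℤ, -(i + 1) + 1 = -i := fun i ↦ by ring
    simp only [hfg, hshift, this, neg_zero]
  convert h₁.of_nat_of_neg_add_one h₂ using 1
  ring

namespace LensRecurrence

variable {α β : ℝ} {b : ℤ → ℝ}

theorem comp_neg (hb : LensRecurrence α β b) : LensRecurrence α β (fun n ↦ b (-n)) := by
  intro n
  have h := hb (-n)
  simp only [neg_add', neg_sub', sub_neg_eq_add]
  linarith

theorem lensForm_eq (hb : LensRecurrence α β b) (n : ℤ) :
    lensForm α β (b n) (b (n + 1)) = lensForm α β (b 0) (b 1) := by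
  have hper : Function.Periodic (fun n ↦ lensForm α β (b n) (b (n + 1))) 1 := by
    intro n
    have h := hb (n + 1)
    rw [add_sub_cancel_right] at h
    simp only [lensForm, h]
    ring
  simpa using hper.zsmul_eq n

theorem mul_pred_succ (hb : LensRecurrence α β b) {n : ℤ}
    (hQ : lensForm α β (b n) (b (n + 1)) = 0) :
    b (n - 1) * b (n + 1) = b n ^ 2 - β * b n := by
  unfold lensForm at hQ
  linear_combination (-1 : ℝ) * hQ + b (n + 1) * hb n

theorem eq_of_apply_zero_of_apply_one {f g : ℤ → ℝ} (hf : LensRecurrence α β f)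
    (hg : LensRecurrence α β g) (h₀ : f 0 = g 0) (h₁ : f 1 = g 1) : f = g := by
  suffices ∀ n, f n = g n ∧ f (n + 1) = g (n + 1) from funext fun n ↦ (this n).1
  intro n
  induction n using Int.induction_on with
  | zero => exact ⟨h₀, h₁⟩
  | succ n ih =>
    refine ⟨ih.2, ?_⟩
    rw [hf, hg, add_sub_cancel_right, ih.1, ih.2]
  | pred n ih =>
    refine ⟨?_, by rw [sub_add_cancel]; exact ih.1⟩
    have hf' : f (-n - 1) = α * f (-n) - f (-n + 1) + β := by linarith [hf (-n)]
    have hg' : g (-n - 1) = α * g (-n) - g (-n + 1) + β := by linarith [hg (-n)]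
    rw [hf', hg', ih.1, ih.2]

theorem exists_eq_closedForm (hb : LensRecurrence α β b) {l c : ℝ} (hl₀ : l ≠ 0)
    (hl : l + l⁻¹ = α) (hll : l⁻¹ ≠ l) (hc : c * (2 - α) = β) :
    ∃ A B : ℝ, ∀ n, b n = A * l ^ n + B * l ^ (-n) + c := by
  have hd : l - l⁻¹ ≠ 0 := sub_ne_zero.mpr hll.symm
  have hd' : l ^ 2 - 1 ≠ 0 := by
    contrapose! hd
    field_simp
    linear_combination hd
  refine ⟨(b 1 - c - l⁻¹ * (b 0 - c)) / (l - l⁻¹), (l * (b 0 - c) - (b 1 - c)) / (l - l⁻¹),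
    fun n ↦ congrFun (eq_of_apply_zero_of_apply_one hb (lensRecurrence_closedForm hl₀ hl hc _ _)
      ?_ ?_) n⟩
  · simp only [zpow_zero, neg_zero]
    field_simp
    ring
  · simp only [zpow_one, zpow_neg]
    field_simp
    ring

theorem exists_pos_tendsto_div_pow (hb : LensRecurrence α β b)
    (hQ : lensForm α β (b 0) (b 1) = 0) (hpos : ∀ n, 0 < b n) (hβ : β ≠ 0) {l : ℝ}
    (hl : 1 < l) (hlα : l + l⁻¹ = α) :
    ∃ A > 0, Tendsto (fun N : ℕ ↦ b N / l ^ N) atTop (𝓝 A) := by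
  have hl₀ : l ≠ 0 := by positivity
  have hll : l⁻¹ ≠ l := (inv_lt_one_of_one_lt₀ hl |>.trans hl).ne
  have hα : 0 < α - 2 := by
    rw [← hlα]
    have : l + l⁻¹ - 2 = (l - 1) ^ 2 / l := by field_simp; ring
    rw [this]
    exact div_pos (pow_pos (sub_pos.mpr hl) 2) (by positivity)
  have hc : β / (2 - α) * (2 - α) = β := div_mul_cancel₀ β (by linarith)
  obtain ⟨A, B, hAB⟩ := hb.exists_eq_closedForm hl₀ hlα hll hc
  have hfwd : Tendsto (fun N : ℕ ↦ b N / l ^ N) atTop (𝓝 A) :=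
    (tendsto_closedForm_div_pow hl A B _).congr fun N ↦ by rw [hAB]
  have hbwd : Tendsto (fun N : ℕ ↦ b (-N) / l ^ N) atTop (𝓝 B) :=
    (tendsto_closedForm_div_pow hl B A _).congr fun N ↦ by rw [hAB, neg_neg, add_comm (A * _)]
  have hA : 0 ≤ A := ge_of_tendsto' hfwd fun N ↦ by have := hpos N; positivity
  have hB : 0 ≤ B := ge_of_tendsto' hbwd fun N ↦ by have := hpos (-N); positivity
  have hprod : A * B * (l - l⁻¹) ^ 2 = β ^ 2 / (α - 2) := by
    have h₀ : b 0 = A + B + β / (2 - α) := by simp [hAB]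
    have h₁ : b 1 = A * l + B * l⁻¹ + β / (2 - α) := by simp [hAB]
    rw [h₀, h₁, lensForm_closedForm hl₀ hlα hc] at hQ
    have : β ^ 2 / (α - 2) = -(β * (β / (2 - α))) := by
      field_simp [hα.ne', (by linarith : 2 - α ≠ 0)]
      ring
    linarith
  refine ⟨A, hA.lt_of_ne ?_, hfwd⟩
  rintro rfl
  have : 0 < β ^ 2 / (α - 2) := by positivity
  simp [← hprod] at this

theorem one_div_eq_lensPotential_sub (hb : LensRecurrence α β b)
    (hQ : ∀ n, lensForm α β (b n) (b (n + 1)) = 0) (hb₀ : ∀ n, b n ≠ 0) (hβ : β ≠ 0) (n : ℤ) :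
    1 / b n = lensPotential β b n - lensPotential β b (n + 1) := by
  have key := hb.mul_pred_succ (hQ n)
  have := hb₀ n
  have := hb₀ (n + 1)
  unfold lensPotential
  rw [add_sub_cancel_right]
  field_simp
  linear_combination key

theorem hasSum_one_div (hb : LensRecurrence α β b) (hQ : lensForm α β (b 0) (b 1) = 0)
    (hpos : ∀ n, 0 < b n) (hβ : β ≠ 0) {l : ℝ} (hl : 1 < l) (hlα : l + l⁻¹ = α) :
    HasSum (fun n ↦ 1 / b n) ((l - l⁻¹) / -β) := by
  have hl₀ : l ≠ 0 := by positivity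
  have hQ' : ∀ n, lensForm α β (b n) (b (n + 1)) = 0 := fun n ↦ (hb.lensForm_eq n).trans hQ
  have hQneg : lensForm α β (b (-0)) (b (-1)) = 0 := by
    rw [neg_zero, lensForm_comm, ← hQ' (-1), neg_add_cancel]
  obtain ⟨A, hA, hfwd⟩ := hb.exists_pos_tendsto_div_pow hQ hpos hβ hl hlα
  obtain ⟨B, hB, hbwd⟩ := hb.comp_neg.exists_pos_tendsto_div_pow hQneg (fun n ↦ hpos (-n)) hβ hl
    hlα
  have hinv := tendsto_one_div_of_tendsto_div_pow hl hA.ne' hfwd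
  have hratio := tendsto_succ_div_of_tendsto_div_pow hl₀ hA.ne' hfwd
  have hinv' := tendsto_one_div_of_tendsto_div_pow hl hB.ne' hbwd
  have hratio' := tendsto_succ_div_of_tendsto_div_pow hl₀ hB.ne' hbwd
  have hpot : Tendsto (fun N : ℕ ↦ lensPotential β b N) atTop (𝓝 (0 - l⁻¹ / β)) := by
    rw [← tendsto_add_atTop_iff_nat 1]
    refine ((hinv.comp (tendsto_add_atTop_nat 1)).sub ((hratio.inv₀ hl₀).div_const β)).congr
      fun N ↦ ?_
    simp [lensPotential, inv_div]
  have hpot' : Tendsto (fun N : ℕ ↦ lensPotential β b (-N)) atTop (𝓝 (0 - l / β)) := by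
    refine (hinv'.sub (hratio'.div_const β)).congr fun N ↦ ?_
    simp only [lensPotential, Nat.cast_succ, neg_add']
  convert hasSum_int_of_eq_sub_succ (fun n ↦ (one_div_pos.mpr (hpos n)).le)
    (hb.one_div_eq_lensPotential_sub hQ' (fun n ↦ (hpos n).ne') hβ) hpot hpot' using 1
  field_simp
  ring

end LensRecurrence

/-- For a positive lens sequence with `α > 2` and `β < 0`, the reciprocals
are summable over `ℤ` and their sum equals `√(α² - 4)/(-β)`. -/
theorem lens_recurrence_sum_of_reciprocals
    (b : ℤ → ℝ) (α β : ℝ)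
    (hrec : ∀ n : ℤ, b (n + 1) = α * b n - b (n - 1) + β)
    (n₀ : ℤ)
    (hcomp : (b n₀) ^ 2 + (b (n₀ + 1)) ^ 2
      = α * b n₀ * b (n₀ + 1) + β * (b n₀ + b (n₀ + 1)))
    (hα : α > 2) (hβ : β < 0) (hb : ∀ n : ℤ, b n > 0) :
    Summable (fun n : ℤ => 1 / b n) ∧
      ∑' n : ℤ, 1 / b n = Real.sqrt (α ^ 2 - 4) / (-β) := by
  obtain ⟨l, hl, hlα, hdiff⟩ := exists_one_lt_add_inv_eq hα
  have hrec : LensRecurrence α β b := hrec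
  have hQ : lensForm α β (b 0) (b 1) = 0 := by
    rw [← hrec.lensForm_eq n₀, lensForm]
    linear_combination hcomp
  have hsum := hrec.hasSum_one_div hQ hb hβ.ne hl hlα
  rw [hdiff] at hsum
  exact ⟨hsum.summable, hsum.tsum_eq⟩
end

section
/- Let b : ℤ → ℚ with b(n) ≠ 0 for all n satisfy the lens recurrence b(n+1) = α·b(n) − b(n−1) + β for all n ∈ ℤ, and suppose the compatibility condition b(n₀)² + b(n₀+1)² = α·b(n₀)·b(n₀+1) + β·(b(n₀) + b(n₀+1)) holds at some index n₀. Then for every n ∈ ℤ: b(n−1)/b(n) + b(n+2)/b(n+1) = α; equivalently, b(n−1)·b(n+1) + b(n)·b(n+2) = α·b(n)·b(n+1). -/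
/-! The quantity `b n ^ 2 + b (n + 1) ^ 2 - α b n b (n + 1) - β (b n + b (n + 1))` is a first
integral of the lens recurrence: its increment factors as `(b (n + 2) - b n)` times the
recurrence relation at `n + 1`. So compatibility at one index gives it at every index, and
adding `b (n + 1)` times the recurrence at `n` and `b n` times the recurrence at `n + 1`,
then subtracting the compatibility relation at `n`, leaves the four-term identity. -/

section LensRecurrence

variable {R : Type*} [CommRing R] (b : ℤ → R) (α β : R)

def lensDefect (n : ℤ) : R :=
  b n ^ 2 + b (n + 1) ^ 2 - α * b n * b (n + 1) - β * (b n + b (n + 1))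

variable {b α β}

theorem lens_recurrence_succ (hrec : ∀ n : ℤ, b (n + 1) = α * b n - b (n - 1) + β) (n : ℤ) :
    b (n + 2) = α * b (n + 1) - b n + β := by
  simpa only [add_assoc, one_add_one_eq_two, add_sub_cancel_right] using hrec (n + 1)

theorem lensDefect_periodic (hrec : ∀ n : ℤ, b (n + 1) = α * b n - b (n - 1) + β) :
    Function.Periodic (lensDefect b α β) 1 := fun n => by
  simp only [lensDefect, add_assoc, one_add_one_eq_two]
  linear_combination (b (n + 2) - b n) * lens_recurrence_succ hrec n

theorem lensDefect_eq (hrec : ∀ n : ℤ, b (n + 1) = α * b n - b (n - 1) + β) (m n : ℤ) :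
    lensDefect b α β m = lensDefect b α β n := by
  have hconst := (lensDefect_periodic hrec).int_mul_eq
  simp only [Int.cast_id, mul_one] at hconst
  rw [hconst m, hconst n]

theorem lens_four_term_of_lensDefect_eq_zero (hrec : ∀ n : ℤ, b (n + 1) = α * b n - b (n - 1) + β) {n : ℤ}
    (hcompat : lensDefect b α β n = 0) :
    b (n - 1) * b (n + 1) + b n * b (n + 2) = α * b n * b (n + 1) := by
  unfold lensDefect at hcompat
  linear_combination b (n + 1) * hrec n + b n * lens_recurrence_succ hrec n - hcompat

end LensRecurrence

/-- For a nowhere-vanishing lens sequence satisfying the compatibility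
condition at some index, `b (n-1)/b n + b (n+2)/b (n+1) = α` for all `n`, and
equivalently `b (n-1) * b (n+1) + b n * b (n+2) = α * b n * b (n+1)`. -/
theorem lens_recurrence_alpha_four_terms
    (b : ℤ → ℚ) (α β : ℚ) (hb : ∀ n : ℤ, b n ≠ 0)
    (hrec : ∀ n : ℤ, b (n + 1) = α * b n - b (n - 1) + β)
    (n₀ : ℤ)
    (hcomp : (b n₀) ^ 2 + (b (n₀ + 1)) ^ 2
      = α * b n₀ * b (n₀ + 1) + β * (b n₀ + b (n₀ + 1))) :
    ∀ n : ℤ, b (n - 1) / b n + b (n + 2) / b (n + 1) = α ∧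
      b (n - 1) * b (n + 1) + b n * b (n + 2) = α * b n * b (n + 1) := by
  intro n
  have hcompat : lensDefect b α β n = 0 := by
    rw [lensDefect_eq hrec n n₀, lensDefect]
    linear_combination hcomp
  have hprod := lens_four_term_of_lensDefect_eq_zero hrec hcompat
  refine ⟨?_, hprod⟩
  rw [div_add_div _ _ (hb n) (hb (n + 1)), div_eq_iff (mul_ne_zero (hb n) (hb (n + 1)))]
  linear_combination hprod
end
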